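/- arXiv:0904.0718 — 3 statements merged into one kernel-verified Lean document; each statement's English description precedes it below -/
import Mathlib

section
/- Let A = {a_1 < a_2 < ... < a_{m^2}} be positive reals with no dyadic interval [x,2x] containing m or more elements of A. Define B = {a_1, a_{2m+1}, a_{4m+1}, ..., a_{m^2-m+1}}. Then any two consecutive elements b < b' of B satisfy b' > 2b, i.e., B is a lacunary (super-geometric) sequence with ratio greater than 2. -/
/-! If `a (2m(i+1)) ≤ 2 a (2mi)`, then by monotonicity the `2m + 1` terms `a (2mi), …, a (2m(i+1))`
all lie in the dyadic interval `[a (2mi), 2 a (2mi)]`, which may hold fewer than `m`. -/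

open Finset

theorem monotoneOn_Iio_of_strict {n : ℕ} {a : ℕ → ℝ}
    (ha : ∀ i j : ℕ, i < j → j < n → a i < a j) : MonotoneOn a (Set.Iio n) := by
  intro i _ j hj hij
  rcases hij.eq_or_lt with rfl | hlt
  · exact le_rfl
  · exact (ha i j hlt hj).le

theorem le_card_filter_dyadic_of_le_two_mul {n i j : ℕ} {a : ℕ → ℝ}
    (ha : MonotoneOn a (Set.Iio n)) (hij : i ≤ j) (hj : j < n) (h : a j ≤ 2 * a i) :
    j + 1 - i ≤ #((range n).filter fun k => a i ≤ a k ∧ a k ≤ 2 * a i) := by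
  rw [← Nat.card_Icc]
  refine card_le_card fun k hk => ?_
  obtain ⟨hik, hkj⟩ := mem_Icc.mp hk
  have hkn : k < n := hkj.trans_lt hj
  simp only [mem_filter, mem_range]
  exact ⟨hkn, ha (hij.trans_lt hj) hkn hik, (ha hkn hj hkj).trans h⟩

theorem stmt_1_general (m : ℕ) (a : ℕ → ℝ)
    (hpos : ∀ i < m ^ 2, 0 < a i)
    (hmono : ∀ i j : ℕ, i < j → j < m ^ 2 → a i < a j)
    (hdyadic : ∀ x : ℝ, 0 < x →
      ((Finset.range (m ^ 2)).filter (fun i => x ≤ a i ∧ a i ≤ 2 * x)).card < m) :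
    ∀ i : ℕ, 2 * m * (i + 1) < m ^ 2 → 2 * a (2 * m * i) < a (2 * m * (i + 1)) := by
  intro i hi
  by_contra! h
  have hstep : 2 * m * (i + 1) = 2 * m * i + 2 * m := by ring
  have hcard := le_card_filter_dyadic_of_le_two_mul (monotoneOn_Iio_of_strict hmono)
    (by omega) hi h
  have hfew := hdyadic _ (hpos (2 * m * i) (by omega))
  omega

/-- If `a 0 < a 1 < ⋯ < a (m^2 - 1)` are positive reals with no dyadic interval
`[x,2x]` containing `m` or more of them, then the subsequence of every `2m`-th
element is lacunary with ratio more than `2`. -/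
theorem stmt_1 (m : ℕ) (hm : 1 ≤ m) (a : ℕ → ℝ)
    (hpos : ∀ i < m ^ 2, 0 < a i)
    (hmono : ∀ i j : ℕ, i < j → j < m ^ 2 → a i < a j)
    (hdyadic : ∀ x : ℝ, 0 < x →
      ((Finset.range (m ^ 2)).filter (fun i => x ≤ a i ∧ a i ≤ 2 * x)).card < m) :
    ∀ i : ℕ, 2 * m * (i + 1) < m ^ 2 → 2 * a (2 * m * i) < a (2 * m * (i + 1)) :=
  stmt_1_general m a hpos hmono hdyadic
end

section
/- (Base step of the distinct-sums lemma) With notation as in the distinct sums lemma: if c_1 + Σ_{i=2}^{k} c_i δ_{i-1} = c'_1 + Σ_{i=2}^{k} c'_i δ_{i-1}, where c_1, c'_1 ∈ C_1, c_i, c'_i ∈ C_i for i ≥ 2, all elements of C_1 exceed all elements of C_2 ∪ ... ∪ C_k, δ_1 > δ_2 > ... > δ_{k-1} > 0 with δ_1 ≤ 1, Σ_{i=2}^{k} 2δ_{i-1} ≤ 2k·δ_1, and for all c > d in C one has c/d − 1 > 2k·δ_1, then c_1 = c'_1. -/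
open Finset

/-!
If `g 0 < f 0`, the lower-order terms must make up the gap `f 0 - g 0`. Every term `g i * δ i`
is below `g 0 * δ i` and the terms `f i * δ i` are positive, so the gap is at most
`g 0 * ∑ δ i ≤ g 0 * (2 k δ₁)`, while the separation hypothesis makes it exceed `g 0 * (2 k δ₁)`.
-/

lemma sub_le_mul_sum_of_add_sum_eq {ι : Type*} (s : Finset ι) (w x y : ι → ℝ) {a b : ℝ}
    (hw : ∀ i ∈ s, 0 ≤ w i) (hx : ∀ i ∈ s, 0 ≤ x i) (hy : ∀ i ∈ s, y i ≤ b)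
    (h : a + ∑ i ∈ s, x i * w i = b + ∑ i ∈ s, y i * w i) :
    a - b ≤ b * ∑ i ∈ s, w i := by
  have hterm : ∀ i ∈ s, y i * w i - x i * w i ≤ b * w i := fun i hi => by
    nlinarith [mul_nonneg (hx i hi) (hw i hi), mul_le_mul_of_nonneg_right (hy i hi) (hw i hi)]
  calc a - b = ∑ i ∈ s, (y i * w i - x i * w i) := by rw [sum_sub_distrib]; linarith
    _ ≤ ∑ i ∈ s, b * w i := sum_le_sum hterm
    _ = b * ∑ i ∈ s, w i := (mul_sum s w b).symm

lemma le_of_add_sum_eq_of_separated {ι : Type*} (s : Finset ι) (w x y : ι → ℝ) {a b W : ℝ}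
    (hw : ∀ i ∈ s, 0 ≤ w i) (hW : ∑ i ∈ s, w i ≤ W)
    (hx : ∀ i ∈ s, 0 ≤ x i) (hy : ∀ i ∈ s, y i ≤ b) (hb : 0 < b)
    (hsep : b < a → W < a / b - 1)
    (h : a + ∑ i ∈ s, x i * w i = b + ∑ i ∈ s, y i * w i) :
    a ≤ b := by
  by_contra! hba
  have hgap : W * b < a - b := by
    have := mul_lt_mul_of_pos_right (hsep hba) hb
    rwa [sub_mul, one_mul, div_mul_cancel₀ _ hb.ne'] at this
  have hbound := sub_le_mul_sum_of_add_sum_eq s w x y hw hx hy h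
  nlinarith [mul_le_mul_of_nonneg_left hW hb.le]

theorem stmt_4_general (k : ℕ) (hk : 2 ≤ k) (δ : ℕ → ℝ)
    (hδpos : ∀ i, 1 ≤ i → i ≤ k - 1 → 0 < δ i)
    (hδsum : ∑ i ∈ Finset.Icc 1 (k - 1), 2 * δ i ≤ 2 * (k : ℝ) * δ 1)
    (C : ℕ → Finset ℝ)
    (hCpos : ∀ i, i < k → ∀ c ∈ C i, (0:ℝ) < c)
    (hCord : ∀ j, 1 ≤ j → j < k → ∀ c ∈ C 0, ∀ d ∈ C j, d < c)
    (hsep : ∀ i j, i < k → j < k → ∀ c ∈ C i, ∀ d ∈ C j, d < c →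
      2 * (k : ℝ) * δ 1 < c / d - 1)
    (f g : ℕ → ℝ) (hf : ∀ i, i < k → f i ∈ C i) (hg : ∀ i, i < k → g i ∈ C i)
    (hsum : f 0 + ∑ i ∈ Finset.Icc 1 (k - 1), f i * δ i =
            g 0 + ∑ i ∈ Finset.Icc 1 (k - 1), g i * δ i) :
    f 0 = g 0 := by
  have hk0 : 0 < k := by omega
  have hδnonneg : ∀ i ∈ Icc 1 (k - 1), 0 ≤ δ i := fun i hi =>
    (hδpos i (mem_Icc.mp hi).1 (mem_Icc.mp hi).2).le
  have hδtotal : ∑ i ∈ Icc 1 (k - 1), δ i ≤ 2 * (k : ℝ) * δ 1 :=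
    (sum_le_sum fun i hi => by linarith [hδnonneg i hi]).trans hδsum
  have key : ∀ F G : ℕ → ℝ, (∀ i, i < k → F i ∈ C i) → (∀ i, i < k → G i ∈ C i) →
      F 0 + ∑ i ∈ Icc 1 (k - 1), F i * δ i = G 0 + ∑ i ∈ Icc 1 (k - 1), G i * δ i →
      F 0 ≤ G 0 := by
    intro F G hF hG hFG
    refine le_of_add_sum_eq_of_separated _ δ F G hδnonneg hδtotal (fun i hi => ?_)
      (fun i hi => ?_) (hCpos 0 hk0 _ (hG 0 hk0))
      (hsep 0 0 hk0 hk0 _ (hF 0 hk0) _ (hG 0 hk0)) hFG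
    all_goals obtain ⟨hi1, hik⟩ : 1 ≤ i ∧ i < k := by have := mem_Icc.mp hi; omega
    · exact (hCpos i hik _ (hF i hik)).le
    · exact (hCord i hi1 hik _ (hG 0 hk0) _ (hG i hik)).le
  exact le_antisymm (key f g hf hg hsum) (key g f hg hf hsum.symm)

/-- Base step of the distinct-sums lemma: under the separation hypothesis the
leading coefficients of two equal weighted sums must agree. -/
theorem stmt_4 (k : ℕ) (hk : 2 ≤ k) (δ : ℕ → ℝ)
    (hδdec : ∀ i, 1 ≤ i → i < k - 1 → δ (i + 1) < δ i)
    (hδpos : ∀ i, 1 ≤ i → i ≤ k - 1 → 0 < δ i)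
    (hδ1 : δ 1 ≤ 1)
    (hδsum : ∑ i ∈ Finset.Icc 1 (k - 1), 2 * δ i ≤ 2 * (k : ℝ) * δ 1)
    (C : ℕ → Finset ℝ)
    (hCpos : ∀ i, i < k → ∀ c ∈ C i, (0:ℝ) < c)
    (hCord : ∀ j, 1 ≤ j → j < k → ∀ c ∈ C 0, ∀ d ∈ C j, d < c)
    (hsep : ∀ i j, i < k → j < k → ∀ c ∈ C i, ∀ d ∈ C j, d < c →
      2 * (k : ℝ) * δ 1 < c / d - 1)
    (f g : ℕ → ℝ) (hf : ∀ i, i < k → f i ∈ C i) (hg : ∀ i, i < k → g i ∈ C i)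
    (hsum : f 0 + ∑ i ∈ Finset.Icc 1 (k - 1), f i * δ i =
            g 0 + ∑ i ∈ Finset.Icc 1 (k - 1), g i * δ i) :
    f 0 = g 0 :=
  stmt_4_general k hk δ hδpos hδsum C hCpos hCord hsep f g hf hg hsum
end

section
/- Let k ≥ 2, 0 < c < c_0(k), 0 < ε < ε_0(k,c), and n > n_0(k,c,ε). Suppose A is a set of n positive reals with |A·A| < n^{1+ε} and B ⊆ A with |B| ≥ n^c. Then there exist θ_1, ..., θ_k ∈ B/B, each θ_i > 1, such that for at least n^{1−O_k(c)} values d ∈ A, all 2^k products θ_1^{γ_1}···θ_k^{γ_k}·d with each γ_i ∈ {0,1} belong to A. -/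
/-!
Cauchy–Schwarz gives `|B|²|D|² ≤ |B·D| E(B, D)` for the multiplicative energy, and sorting the
quadruples of `E(B, D)` by the ratio `b/b'` bounds it by `|B||D| + |B|² max_{b ≠ b'} |D ∩ (b'/b)D|`.
So some `θ ∈ B/B` with `θ > 1` (pass to `θ⁻¹` if needed) has `|D ∩ θ⁻¹D| ≥ |D|²/|A·A| - |D|/|B|`.
Iterating from `D₀ = A` with `D_{i+1} = D_i ∩ θ_{i+1}⁻¹D_i`, every `d ∈ D_k` spans a cube in `A`,
and `|A·A| < n^{1+ε}`, `|B| ≥ n^c` give `|D_j| ≥ n^{1 - (2^{j+1} - 2)ε}` once `2^{k+1}ε < c`.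
-/

open Finset Pointwise
open scoped Combinatorics.Additive

variable {α : Type*}

def cubeProd [CommMonoid α] {k : ℕ} (θ : Fin k → α) (γ : Fin k → Bool) : α :=
  ∏ i, if γ i then θ i else 1

lemma cubeProd_snoc [CommMonoid α] {k : ℕ} (θ : Fin k → α) (t : α) (γ : Fin (k + 1) → Bool) :
    cubeProd (Fin.snoc θ t) γ = cubeProd θ (Fin.init γ) * if γ (Fin.last k) then t else 1 := by
  simp only [cubeProd, Fin.prod_univ_castSucc, Fin.snoc_castSucc, Fin.snoc_last]
  rfl

variable [DecidableEq α]

lemma card_filter_inv_mul_mem [GroupWithZero α] (D : Finset α) {θ : α} (hθ : θ ≠ 0) :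
    #{d ∈ D | θ⁻¹ * d ∈ D} = #{d ∈ D | θ * d ∈ D} := by
  refine card_nbij' (θ⁻¹ * ·) (θ * ·) ?_ ?_ ?_ ?_ <;> intro d <;> simp +contextual [hθ]

lemma mulEnergy_eq_sum_card_filter [CommGroupWithZero α] (B D : Finset α) (hB : 0 ∉ B) :
    Eₘ[B, D] = ∑ p ∈ B ×ˢ B, #{d ∈ D | p.1 / p.2 * d ∈ D} := by
  have key {b₁ b₂ : α} (hb₂ : b₂ ∈ B) (d₁ d₂ : α) : b₁ * d₁ = b₂ * d₂ ↔ b₁ / b₂ * d₁ = d₂ := by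
    rw [div_mul_eq_mul_div, div_eq_iff (ne_of_mem_of_not_mem hb₂ hB), mul_comm d₂, eq_comm]
  rw [← card_sigma, mulEnergy]
  refine card_bij' (fun x _ => ⟨x.1, x.2.1⟩) (fun y _ => (y.1, y.2, y.1.1 / y.1.2 * y.2))
    ?_ ?_ ?_ ?_
  · rintro ⟨⟨b₁, b₂⟩, d₁, d₂⟩ hx
    simp only [mem_filter, mem_product, mem_sigma] at hx ⊢
    obtain ⟨⟨⟨hb₁, hb₂⟩, hd₁, hd₂⟩, h⟩ := hx
    exact ⟨⟨hb₁, hb₂⟩, hd₁, (key hb₂ d₁ d₂).1 h ▸ hd₂⟩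
  · rintro ⟨⟨b₁, b₂⟩, d⟩ hy
    simp only [mem_filter, mem_product, mem_sigma] at hy ⊢
    obtain ⟨⟨hb₁, hb₂⟩, hd, h⟩ := hy
    exact ⟨⟨⟨hb₁, hb₂⟩, hd, h⟩, (key hb₂ d _).2 rfl⟩
  · rintro ⟨⟨b₁, b₂⟩, d₁, d₂⟩ hx
    simp only [mem_filter, mem_product] at hx
    simp [(key hx.1.1.2 d₁ d₂).1 hx.2]
  · intro _ _
    rfl

lemma exists_ne_mulEnergy_le [CommGroupWithZero α] {B : Finset α} (D : Finset α) (hB : 0 ∉ B)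
    (hB₁ : 1 < #B) :
    ∃ b₁ ∈ B, ∃ b₂ ∈ B, b₁ ≠ b₂ ∧
      Eₘ[B, D] ≤ #B * #D + #B ^ 2 * #{d ∈ D | b₁ / b₂ * d ∈ D} := by
  set h : α × α → ℕ := fun p => #{d ∈ D | p.1 / p.2 * d ∈ D}
  have hoff : B.offDiag.Nonempty := by
    obtain ⟨b₁, hb₁, b₂, hb₂, hne⟩ := one_lt_card.1 hB₁
    exact ⟨(b₁, b₂), mem_offDiag.2 ⟨hb₁, hb₂, hne⟩⟩
  obtain ⟨p, hp, hmax⟩ := exists_max_image B.offDiag h hoff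
  obtain ⟨hp₁, hp₂, hne⟩ := mem_offDiag.1 hp
  refine ⟨p.1, hp₁, p.2, hp₂, hne, ?_⟩
  rw [mulEnergy_eq_sum_card_filter B D hB, ← diag_union_offDiag,
    sum_union (disjoint_diag_offDiag B)]
  gcongr
  · calc ∑ q ∈ B.diag, h q ≤ #B.diag • #D := sum_le_card_nsmul _ _ _ fun _ _ => card_filter_le _ _
      _ = #B * #D := by rw [diag_card, smul_eq_mul]
  · calc ∑ q ∈ B.offDiag, h q ≤ #B.offDiag • h p := sum_le_card_nsmul _ _ _ hmax
      _ ≤ #B ^ 2 * h p := by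
        rw [smul_eq_mul, offDiag_card, sq]
        gcongr
        exact Nat.sub_le _ _

lemma sq_div_sub_div_le {b x m h : ℝ} (hb : 0 < b) (hx₀ : 0 ≤ x) (hm : 0 ≤ m) (hh : 0 ≤ h)
    (hx : b ^ 2 * x ^ 2 ≤ m * (b * x + b ^ 2 * h)) : x ^ 2 / m - x / b ≤ h := by
  rcases hm.eq_or_lt with rfl | hm
  · rw [div_zero, zero_sub]
    exact (neg_nonpos.2 (by positivity)).trans hh
  rw [sub_le_iff_le_add, div_le_iff₀ hm, ← mul_le_mul_iff_right₀ (pow_pos hb 2)]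
  calc b ^ 2 * x ^ 2 ≤ m * (b * x + b ^ 2 * h) := hx
    _ = b ^ 2 * ((h + x / b) * m) := by field_simp; ring

lemma exists_one_lt_mem_div_card_filter_ge [Field α] [LinearOrder α] [IsStrictOrderedRing α]
    {B : Finset α} (D : Finset α) (hB : ∀ b ∈ B, 0 < b) (hB₁ : 1 < #B) :
    ∃ θ ∈ B / B, 1 < θ ∧
      (#D : ℝ) ^ 2 / #(B * D) - #D / #B ≤ #{d ∈ D | θ * d ∈ D} := by
  obtain ⟨b₁, hb₁, b₂, hb₂, hne, hE⟩ :=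
    exists_ne_mulEnergy_le D (fun h => (hB 0 h).false) hB₁
  have hbound : (#D : ℝ) ^ 2 / #(B * D) - #D / #B ≤ #{d ∈ D | b₁ / b₂ * d ∈ D} := by
    apply sq_div_sub_div_le (by positivity) (by positivity) (by positivity) (by positivity)
    exact_mod_cast (le_card_mul_mul_mulEnergy B D).trans (Nat.mul_le_mul_left _ hE)
  have hpos : 0 < b₁ / b₂ := div_pos (hB b₁ hb₁) (hB b₂ hb₂)
  rcases lt_or_gt_of_ne (hne ∘ (div_eq_one_iff_eq (hB b₂ hb₂).ne').1) with hlt | hgt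
  · refine ⟨(b₁ / b₂)⁻¹, ?_, one_lt_inv_iff₀.2 ⟨hpos, hlt⟩, ?_⟩
    · rw [inv_div]
      exact div_mem_div hb₂ hb₁
    · rwa [card_filter_inv_mul_mem D hpos.ne']
  · exact ⟨b₁ / b₂, div_mem_div hb₁ hb₂, hgt, hbound⟩

def cubeSet [CommMonoid α] (A : Finset α) {k : ℕ} (θ : Fin k → α) : Finset α :=
  {d ∈ A | ∀ γ : Fin k → Bool, cubeProd θ γ * d ∈ A}

lemma cubeSet_elim0 [CommMonoid α] (A : Finset α) (θ : Fin 0 → α) : cubeSet A θ = A := by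
  simp [cubeSet, cubeProd]

lemma filter_mul_mem_cubeSet_subset [CommMonoid α] (A : Finset α) {k : ℕ} (θ : Fin k → α) (t : α) :
    {d ∈ cubeSet A θ | t * d ∈ cubeSet A θ} ⊆ cubeSet A (Fin.snoc θ t) := by
  intro d hd
  simp only [cubeSet, mem_filter] at hd ⊢
  obtain ⟨⟨hdA, hd⟩, -, htd⟩ := hd
  refine ⟨hdA, fun γ => ?_⟩
  rw [cubeProd_snoc]
  cases γ (Fin.last k)
  · simpa using hd (Fin.init γ)
  · simpa [mul_assoc] using htd (Fin.init γ)

theorem exists_cube_of_card_bound [Field α] [LinearOrder α] [IsStrictOrderedRing α]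
    {A B : Finset α} (hB : ∀ b ∈ B, 0 < b) (hBA : B ⊆ A) (hB₁ : 1 < #B) (L : ℕ → ℝ) (k : ℕ)
    (h₀ : L 0 ≤ #A)
    (hstep : ∀ j < k, ∀ D ⊆ A, L j ≤ #D → L (j + 1) ≤ (#D : ℝ) ^ 2 / #(A * A) - #D / #B) :
    ∃ θ : Fin k → α, (∀ i, θ i ∈ B / B ∧ 1 < θ i) ∧ L k ≤ #(cubeSet A θ) := by
  induction k with
  | zero => exact ⟨Fin.elim0, fun i => i.elim0, by rwa [cubeSet_elim0]⟩
  | succ k ih =>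
    obtain ⟨θ, hθ, hL⟩ := ih fun j hj => hstep j (hj.trans k.lt_succ_self)
    set D := cubeSet A θ
    have hDA : D ⊆ A := filter_subset _ _
    obtain ⟨t, ht, ht₁, hD⟩ := exists_one_lt_mem_div_card_filter_ge D hB hB₁
    have hBD : (#D : ℝ) ^ 2 / #(A * A) ≤ #D ^ 2 / #(B * D) := by
      rcases D.eq_empty_or_nonempty with hD₀ | hD₀
      · simp [hD₀]
      obtain ⟨b, hb⟩ := card_pos.1 (zero_lt_one.trans hB₁)
      refine div_le_div_of_nonneg_left (by positivity) ?_ ?_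
      · exact_mod_cast (Nonempty.mul ⟨b, hb⟩ hD₀).card_pos
      · exact_mod_cast card_le_card (mul_subset_mul hBA hDA)
    refine ⟨Fin.snoc θ t, fun i => ?_, ?_⟩
    · refine Fin.lastCases ?_ (fun i => ?_) i
      · simpa using ⟨ht, ht₁⟩
      · simpa using hθ i
    calc L (k + 1) ≤ (#D : ℝ) ^ 2 / #(A * A) - #D / #B := hstep k k.lt_succ_self D hDA hL
      _ ≤ #{d ∈ D | t * d ∈ D} := by linarith
      _ ≤ #(cubeSet A (Fin.snoc θ t)) := by
        exact_mod_cast card_le_card (filter_mul_mem_cubeSet_subset A θ t)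

lemma rpow_le_sq_div_sub_div {n x M N b ε c : ℝ} (hn : 1 ≤ n) (hε : 2 ≤ n ^ ε)
    (hc : 2 * b + 3 * ε ≤ c) (hx : n ^ (1 - b) ≤ x) (hxn : x ≤ n) (hM : 0 < M)
    (hMn : M ≤ n ^ (1 + ε)) (hN : n ^ c ≤ N) :
    n ^ (1 - 2 * b - 2 * ε) ≤ x ^ 2 / M - x / N := by
  have hn₀ : 0 < n := zero_lt_one.trans_le hn
  set m := n ^ (1 - 2 * b - 3 * ε)
  have hm : 0 ≤ m := by positivity
  have hmain : n ^ (1 - 2 * b - ε) ≤ x ^ 2 / M :=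
    calc n ^ (1 - 2 * b - ε) = (n ^ (1 - b)) ^ 2 / n ^ (1 + ε) := by
          rw [← Real.rpow_two, ← Real.rpow_mul hn₀.le, ← Real.rpow_sub hn₀]
          ring_nf
      _ ≤ x ^ 2 / M := div_le_div₀ (by positivity) (pow_le_pow_left₀ (by positivity) hx 2) hM hMn
  have herr : x / N ≤ m :=
    calc x / N ≤ n / n ^ c := div_le_div₀ hn₀.le hxn (by positivity) hN
      _ = n ^ (1 - c) := by rw [Real.rpow_sub hn₀, Real.rpow_one]
      _ ≤ m := Real.rpow_le_rpow_of_exponent_le hn (by linarith)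
  have e₁ : n ^ (1 - 2 * b - ε) = m * (n ^ ε) ^ 2 := by
    rw [← Real.rpow_two, ← Real.rpow_mul hn₀.le, ← Real.rpow_add hn₀]
    ring_nf
  have e₂ : n ^ (1 - 2 * b - 2 * ε) = m * n ^ ε := by
    rw [← Real.rpow_add hn₀]
    ring_nf
  -- `y ^ 2 - y - 1 ≥ 0` for `y = n ^ ε ≥ 2`
  have hgap : m * n ^ ε ≤ m * (n ^ ε) ^ 2 - m := by
    nlinarith [mul_nonneg hm (mul_nonneg (sub_nonneg.2 hε) (by linarith : (0:ℝ) ≤ n ^ ε + 1))]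
  linarith

theorem stmt_12_general (k : ℕ) :
    ∃ Ck : ℝ, 0 < Ck ∧ ∃ c₀ : ℝ, 0 < c₀ ∧ ∀ c : ℝ, 0 < c → c < c₀ →
      ∃ ε₀ : ℝ, 0 < ε₀ ∧ ∀ ε : ℝ, 0 < ε → ε < ε₀ →
        ∃ n₀ : ℕ, ∀ n : ℕ, n₀ < n → ∀ A B : Finset ℝ,
          A.card = n → (∀ a ∈ A, (0:ℝ) < a) → B ⊆ A →
          ((A * A).card : ℝ) < (n : ℝ) ^ ((1 : ℝ) + ε) →
          (n : ℝ) ^ c ≤ (B.card : ℝ) →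
          ∃ θ : Fin k → ℝ, (∀ i, θ i ∈ B / B ∧ 1 < θ i) ∧
            (n : ℝ) ^ ((1 : ℝ) - Ck * c) ≤
              (((A.filter (fun d => ∀ γ : Fin k → Bool,
                (∏ i, if γ i then θ i else 1) * d ∈ A)).card : ℝ)) := by
  refine ⟨1, one_pos, 1, one_pos, fun c hc _ => ⟨c / 2 ^ (k + 1), by positivity,
    fun ε hε hεc => ⟨⌈(2 : ℝ) ^ ε⁻¹⌉₊, fun n hn₀ A B hA hApos hBA hAA hB => ?_⟩⟩⟩
  have hεc' : 2 ^ (k + 1) * ε < c := by rwa [lt_div_iff₀' (by positivity)] at hεc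
  have hn : (1 : ℝ) ≤ n := by exact_mod_cast (Nat.zero_le _).trans_lt hn₀
  have hnε : 2 ≤ (n : ℝ) ^ ε :=
    (Real.rpow_inv_le_iff_of_pos zero_le_two (by positivity) hε).1
      ((Nat.le_ceil _).trans (by exact_mod_cast hn₀.le))
  have hB₁ : 1 < #B := by
    have hεc₁ : ε ≤ c := (le_mul_of_one_le_left hε.le (one_le_pow₀ one_le_two)).trans hεc'.le
    exact_mod_cast (hnε.trans (Real.rpow_le_rpow_of_exponent_le hn hεc₁)).trans hB
  have hAA₀ : 0 < (#(A * A) : ℝ) := by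
    have hAne : A.Nonempty := card_pos.1 (hA ▸ (Nat.zero_le _).trans_lt hn₀)
    exact_mod_cast (hAne.mul hAne).card_pos
  obtain ⟨θ, hθ, hcard⟩ := exists_cube_of_card_bound (fun b hb => hApos b (hBA hb)) hBA hB₁
    (fun j => (n : ℝ) ^ (1 - (2 ^ (j + 1) - 2) * ε)) k (by simp [hA]) fun j hj D hDA hD => by
      have hexp : 2 * ((2 ^ (j + 1) - 2) * ε) + 3 * ε ≤ c := by
        have h2j : (2 : ℝ) ^ (j + 1) * 2 ≤ 2 ^ (k + 1) := by
          rw [← pow_succ]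
          exact pow_le_pow_right₀ one_le_two (by omega)
        nlinarith
      convert rpow_le_sq_div_sub_div hn hnε hexp hD
        (by exact_mod_cast hA ▸ card_le_card hDA) hAA₀ hAA.le hB using 2
      ring
  refine ⟨θ, hθ, le_trans (Real.rpow_le_rpow_of_exponent_le hn ?_) hcard⟩
  linarith

/-- Multiplicative Szemerédi cube lemma: if `|A·A| < n^{1+ε}` and `B ⊆ A` with
`|B| ≥ n^c`, there are `θ₁,…,θ_k ∈ B/B`, each `> 1`, such that at least
`n^{1−O_k(c)}` elements `d ∈ A` have all `2^k` products `θ₁^{γ₁}⋯θ_k^{γ_k}·d` in `A`. -/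
theorem stmt_12 (k : ℕ) (hk : 2 ≤ k) :
    ∃ Ck : ℝ, 0 < Ck ∧ ∃ c₀ : ℝ, 0 < c₀ ∧ ∀ c : ℝ, 0 < c → c < c₀ →
      ∃ ε₀ : ℝ, 0 < ε₀ ∧ ∀ ε : ℝ, 0 < ε → ε < ε₀ →
        ∃ n₀ : ℕ, ∀ n : ℕ, n₀ < n → ∀ A B : Finset ℝ,
          A.card = n → (∀ a ∈ A, (0:ℝ) < a) → B ⊆ A →
          ((A * A).card : ℝ) < (n : ℝ) ^ ((1 : ℝ) + ε) →
          (n : ℝ) ^ c ≤ (B.card : ℝ) →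
          ∃ θ : Fin k → ℝ, (∀ i, θ i ∈ B / B ∧ 1 < θ i) ∧
            (n : ℝ) ^ ((1 : ℝ) - Ck * c) ≤
              (((A.filter (fun d => ∀ γ : Fin k → Bool,
                (∏ i, if γ i then θ i else 1) * d ∈ A)).card : ℝ)) :=
  stmt_12_general k
end
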